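/- arXiv:1605.06138 — 2 statements merged into one kernel-verified Lean document; each statement's English description precedes it below -/
import Mathlib

section
/- Let F ∈ ℝ^N, V an N × m matrix with orthonormal columns (VᵀV = I), and P an N × m selection matrix with PᵀV invertible. Define F̄ = V (PᵀV)⁻¹ Pᵀ F. Then ‖F − F̄‖₂ ≤ ‖(PᵀV)⁻¹‖₂ · ‖(I − VVᵀ)F‖₂, where ‖·‖₂ denotes the Euclidean vector norm and the spectral (operator) matrix norm respectively. -/
open Matrix

/-!
Let `r = F - F̄` and `c = ‖(PᵀV)⁻¹‖`. Then `Pᵀ r = 0` and `(I - VVᵀ) r = (I - VVᵀ) F`, and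
`c ≥ 1` because `PᵀV` is a contraction. Put `z = Vᵀ r`, so that `‖(I - VVᵀ) r‖² = ‖r‖² - ‖z‖²`.
As `Pᵀ r = 0`, `‖z‖² = ⟪r, V z⟫ = ⟪r, (I - PPᵀ) V z⟫`, while
`‖(I - PPᵀ) V z‖² = ‖z‖² - ‖PᵀV z‖² ≤ (1 - c⁻²) ‖z‖²`. Cauchy–Schwarz therefore gives
`‖z‖² ≤ (1 - c⁻²) ‖r‖²`, which rearranges to `‖r‖² ≤ c² (‖r‖² - ‖z‖²)`.
-/

lemma le_sq_mul_sub_of_sq_le_mul_sub {R Z W c : ℝ} (hc : 1 ≤ c) (hR : 0 ≤ R) (hZ : 0 ≤ Z)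
    (hRZW : Z ^ 2 ≤ R * (Z - W)) (hZW : Z ≤ c ^ 2 * W) : R ≤ c ^ 2 * (R - Z) := by
  have hc2 : 1 ≤ c ^ 2 := one_le_pow₀ hc
  rcases hZ.eq_or_lt with rfl | hZ
  · nlinarith
  · refine le_of_mul_le_mul_left ?_ hZ
    nlinarith [mul_le_mul_of_nonneg_left hRZW (zero_le_one.trans hc2),
      mul_le_mul_of_nonneg_left hZW hR]

section

variable {n k : Type*} [Fintype n] [Fintype k]

lemma norm_toLp_sq (v : n → ℝ) : ‖WithLp.toLp 2 v‖ ^ 2 = v ⬝ᵥ v := by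
  rw [← real_inner_self_eq_norm_sq, EuclideanSpace.inner_toLp_toLp, star_trivial]

lemma sq_dotProduct_le (u v : n → ℝ) : (u ⬝ᵥ v) ^ 2 ≤ (u ⬝ᵥ u) * (v ⬝ᵥ v) := by
  have := real_inner_mul_inner_self_le (WithLp.toLp 2 u) (WithLp.toLp 2 v)
  simp only [EuclideanSpace.inner_toLp_toLp, star_trivial, dotProduct_comm v u] at this
  rwa [sq]

variable {U : Matrix n k ℝ}

lemma dotProduct_mulVec_eq_transpose_mulVec_dotProduct (x : n → ℝ) (y : k → ℝ) :
    x ⬝ᵥ U *ᵥ y = Uᵀ *ᵥ x ⬝ᵥ y := by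
  rw [dotProduct_mulVec, ← mulVec_transpose]

variable [DecidableEq k]

lemma dotProduct_mulVec_mulVec_of_transpose_mul_self (hU : Uᵀ * U = 1) (x y : k → ℝ) :
    U *ᵥ x ⬝ᵥ U *ᵥ y = x ⬝ᵥ y := by
  rw [dotProduct_mulVec_eq_transpose_mulVec_dotProduct, mulVec_mulVec, hU, one_mulVec]

lemma transpose_mulVec_sub_interpolant {V P : Matrix n k ℝ} (hA : IsUnit (Pᵀ * V))
    (x : n → ℝ) : Pᵀ *ᵥ (x - (V * (Pᵀ * V)⁻¹ * Pᵀ) *ᵥ x) = 0 := by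
  rw [mulVec_sub, mulVec_mulVec, ← Matrix.mul_assoc, ← Matrix.mul_assoc,
    mul_nonsing_inv _ ((Pᵀ * V).isUnit_iff_isUnit_det.mp hA), Matrix.one_mul, sub_self]

variable [DecidableEq n]

lemma dotProduct_self_one_sub_mul_transpose_mulVec (hU : Uᵀ * U = 1) (x : n → ℝ) :
    (1 - U * Uᵀ) *ᵥ x ⬝ᵥ (1 - U * Uᵀ) *ᵥ x = x ⬝ᵥ x - Uᵀ *ᵥ x ⬝ᵥ Uᵀ *ᵥ x := by
  have hx := dotProduct_mulVec_eq_transpose_mulVec_dotProduct (U := U) x (Uᵀ *ᵥ x)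
  rw [sub_mulVec, one_mulVec, ← mulVec_mulVec]
  simp only [sub_dotProduct, dotProduct_sub, dotProduct_mulVec_mulVec_of_transpose_mul_self hU,
    dotProduct_comm _ x, hx]
  ring

lemma transpose_mulVec_dotProduct_self_le (hU : Uᵀ * U = 1) (x : n → ℝ) :
    Uᵀ *ᵥ x ⬝ᵥ Uᵀ *ᵥ x ≤ x ⬝ᵥ x := by
  have := dotProduct_self_one_sub_mul_transpose_mulVec hU x
  have : 0 ≤ (1 - U * Uᵀ) *ᵥ x ⬝ᵥ (1 - U * Uᵀ) *ᵥ x := dotProduct_self_star_nonneg _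
  linarith

lemma one_sub_mul_transpose_mulVec_sub_mul_mulVec {V : Matrix n k ℝ} (hV : Vᵀ * V = 1)
    (B : Matrix k n ℝ) (x : n → ℝ) :
    (1 - V * Vᵀ) *ᵥ (x - (V * B) *ᵥ x) = (1 - V * Vᵀ) *ᵥ x := by
  rw [mulVec_sub, mulVec_mulVec, ← Matrix.mul_assoc, Matrix.sub_mul, Matrix.one_mul,
    Matrix.mul_assoc, hV, Matrix.mul_one, sub_self, Matrix.zero_mul, zero_mulVec, sub_zero]

lemma dotProduct_self_le_of_transpose_mulVec_eq_zero {V P : Matrix n k ℝ} (hV : Vᵀ * V = 1)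
    (hP : Pᵀ * P = 1) {c : ℝ} (hc : 1 ≤ c)
    (hA : ∀ y, y ⬝ᵥ y ≤ c ^ 2 * ((Pᵀ * V) *ᵥ y ⬝ᵥ (Pᵀ * V) *ᵥ y)) {r : n → ℝ}
    (hr : Pᵀ *ᵥ r = 0) : r ⬝ᵥ r ≤ c ^ 2 * ((1 - V * Vᵀ) *ᵥ r ⬝ᵥ (1 - V * Vᵀ) *ᵥ r) := by
  set z := Vᵀ *ᵥ r
  set w := (1 - P * Pᵀ) *ᵥ (V *ᵥ z) with hw_def
  have hrw : r ⬝ᵥ w = z ⬝ᵥ z := by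
    rw [hw_def, sub_mulVec, one_mulVec, dotProduct_sub, ← mulVec_mulVec,
      dotProduct_mulVec_eq_transpose_mulVec_dotProduct r (Pᵀ *ᵥ _), hr, zero_dotProduct,
      sub_zero, dotProduct_mulVec_eq_transpose_mulVec_dotProduct]
  have hw : w ⬝ᵥ w = z ⬝ᵥ z - (Pᵀ * V) *ᵥ z ⬝ᵥ (Pᵀ * V) *ᵥ z := by
    rw [hw_def, dotProduct_self_one_sub_mul_transpose_mulVec hP,
      dotProduct_mulVec_mulVec_of_transpose_mul_self hV, mulVec_mulVec]
  have hCS := sq_dotProduct_le r w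
  rw [hrw, hw] at hCS
  rw [dotProduct_self_one_sub_mul_transpose_mulVec hV]
  exact le_sq_mul_sub_of_sq_le_mul_sub hc (dotProduct_self_star_nonneg r)
    (dotProduct_self_star_nonneg z) hCS (hA z)

lemma dotProduct_self_le_norm_inv_sq_mul {A : Matrix k k ℝ} (hA : IsUnit A) (y : k → ℝ) :
    y ⬝ᵥ y ≤ ‖toEuclideanCLM (𝕜 := ℝ) A⁻¹‖ ^ 2 * (A *ᵥ y ⬝ᵥ A *ᵥ y) := by
  rw [← norm_toLp_sq, ← norm_toLp_sq, ← mul_pow]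
  gcongr
  calc ‖WithLp.toLp 2 y‖ = ‖toEuclideanCLM (𝕜 := ℝ) A⁻¹ (WithLp.toLp 2 (A *ᵥ y))‖ := by
        rw [toEuclideanCLM_toLp, mulVec_mulVec,
          nonsing_inv_mul _ (A.isUnit_iff_isUnit_det.mp hA), one_mulVec]
    _ ≤ _ := ContinuousLinearMap.le_opNorm _ _

lemma one_le_norm_toEuclideanCLM_inv [Nonempty k] {V P : Matrix n k ℝ} (hV : Vᵀ * V = 1)
    (hP : Pᵀ * P = 1) (hA : IsUnit (Pᵀ * V)) : 1 ≤ ‖toEuclideanCLM (𝕜 := ℝ) (Pᵀ * V)⁻¹‖ := by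
  obtain ⟨i⟩ := ‹Nonempty k›
  set y : k → ℝ := Pi.single i 1
  have hy : y ⬝ᵥ y = 1 := by simp [y]
  have hcontr : (Pᵀ * V) *ᵥ y ⬝ᵥ (Pᵀ * V) *ᵥ y ≤ y ⬝ᵥ y := by
    rw [← mulVec_mulVec, ← dotProduct_mulVec_mulVec_of_transpose_mul_self hV y y]
    exact transpose_mulVec_dotProduct_self_le hP _
  have hinv := dotProduct_self_le_norm_inv_sq_mul hA y
  rw [hy] at hcontr hinv
  nlinarith [norm_nonneg (toEuclideanCLM (𝕜 := ℝ) (Pᵀ * V)⁻¹)]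

end

lemma transpose_mul_self_eq_one_of_injective {n k : Type*} [Fintype n] [DecidableEq n]
    [DecidableEq k] {P : Matrix n k ℝ} {ρ : k → n} (hρ : Function.Injective ρ)
    (hP : ∀ i j, P i j = if i = ρ j then 1 else 0) : Pᵀ * P = 1 := by
  ext j j'
  simp [mul_apply, hP, one_apply, hρ.eq_iff, eq_comm]

theorem deim_error_bound_general (N m : ℕ) (hm : 0 < m)
    (V P : Matrix (Fin N) (Fin m) ℝ)
    (hV : Vᵀ * V = 1)
    (ρ : Fin m → Fin N) (hρ : Function.Injective ρ)
    (hP : ∀ i j, P i j = if i = ρ j then (1 : ℝ) else 0)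
    (hinv : IsUnit (Pᵀ * V)) (F : EuclideanSpace ℝ (Fin N)) :
    ‖F - (WithLp.equiv 2 (Fin N → ℝ)).symm ((V * (Pᵀ * V)⁻¹ * Pᵀ).mulVec F)‖ ≤
      ‖Matrix.toEuclideanCLM (𝕜 := ℝ) ((Pᵀ * V)⁻¹)‖ *
        ‖(WithLp.equiv 2 (Fin N → ℝ)).symm
            (((1 : Matrix (Fin N) (Fin N) ℝ) - V * Vᵀ).mulVec F)‖ := by
  have := Fin.pos_iff_nonempty.mp hm
  have hPP := transpose_mul_self_eq_one_of_injective hρ hP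
  have key := dotProduct_self_le_of_transpose_mulVec_eq_zero hV hPP
    (one_le_norm_toEuclideanCLM_inv hV hPP hinv) (dotProduct_self_le_norm_inv_sq_mul hinv)
    (transpose_mulVec_sub_interpolant hinv F.ofLp)
  rw [Matrix.mul_assoc, one_sub_mul_transpose_mulVec_sub_mul_mulVec hV, ← Matrix.mul_assoc,
    ← norm_toLp_sq, ← norm_toLp_sq, ← mul_pow] at key
  exact le_of_pow_le_pow_left₀ two_ne_zero (by positivity) key

theorem deim_error_bound (N m : ℕ) (hN : 0 < N) (hm : 0 < m) (hmN : m ≤ N)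
    (V P : Matrix (Fin N) (Fin m) ℝ)
    (hV : Vᵀ * V = 1)
    (ρ : Fin m → Fin N) (hρ : Function.Injective ρ)
    (hP : ∀ i j, P i j = if i = ρ j then (1 : ℝ) else 0)
    (hinv : IsUnit (Pᵀ * V)) (F : EuclideanSpace ℝ (Fin N)) :
    ‖F - (WithLp.equiv 2 (Fin N → ℝ)).symm ((V * (Pᵀ * V)⁻¹ * Pᵀ).mulVec F)‖ ≤
      ‖Matrix.toEuclideanCLM (𝕜 := ℝ) ((Pᵀ * V)⁻¹)‖ *
        ‖(WithLp.equiv 2 (Fin N → ℝ)).symm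
            (((1 : Matrix (Fin N) (Fin N) ℝ) - V * Vᵀ).mulVec F)‖ :=
  deim_error_bound_general N m hm V P hV ρ hρ hP hinv F
end

section
/- Inf-sup stability of the enriched reduced space: let X and M be finite-dimensional real inner product spaces and b : X × M → ℝ a bilinear form satisfying the discrete inf-sup condition: there exists γ_h > 0 such that for every 0 ≠ q ∈ M there exists 0 ≠ v ∈ X with b(v,q) ≥ γ_h ‖v‖_X ‖q‖_M. Let M_R ⊆ M be a subspace and suppose X_R ⊆ X is a subspace containing, for every q in a spanning set of M_R, the supremizer s(q) ∈ X defined by ⟨s(q), v⟩_X = b(v, q) for all v ∈ X, and suppose q ↦ s(q) is linear. Then for every 0 ≠ q_R ∈ M_R, sup_{0 ≠ v_R ∈ X_R} b(v_R, q_R)/(‖v_R‖_X ‖q_R‖_M) ≥ γ_h; i.e., the reduced pair (X_R, M_R) inherits the inf-sup constant γ_h. -/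
/-!
The supremizer `s q` is the Riesz representative of `b(·, q)`, so by Cauchy–Schwarz it maximizes
`b(v, q) / ‖v‖` over all of `X`, with maximal value `‖s q‖`. As it lies in `X_R`, the reduced
supremum is still `‖s q‖ / ‖q‖`, which the full inf-sup condition bounds below by `γ`.
-/

open scoped InnerProductSpace

section Supremizer

variable {X M : Type*} [NormedAddCommGroup X] [InnerProductSpace ℝ X] [NormedAddCommGroup M]
  [Module ℝ M] {b : X →ₗ[ℝ] M →ₗ[ℝ] ℝ} {q : M} {w : X}

theorem apply_le_norm_riesz_mul (hw : ∀ v : X, ⟪w, v⟫_ℝ = b v q) (v : X) :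
    b v q ≤ ‖w‖ * ‖v‖ :=
  hw v ▸ real_inner_le_norm w v

theorem apply_riesz_eq_norm_sq (hw : ∀ v : X, ⟪w, v⟫_ℝ = b v q) : b w q = ‖w‖ ^ 2 := by
  rw [← hw w, real_inner_self_eq_norm_sq]

theorem mul_norm_le_norm_riesz (hw : ∀ v : X, ⟪w, v⟫_ℝ = b v q) {γ : ℝ} {v : X} (hv : v ≠ 0)
    (h : γ * (‖v‖ * ‖q‖) ≤ b v q) : γ * ‖q‖ ≤ ‖w‖ :=
  le_of_mul_le_mul_right (by linarith [apply_le_norm_riesz_mul hw v]) (norm_pos_iff.mpr hv)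

theorem isGreatest_div_norm_riesz (hw : ∀ v : X, ⟪w, v⟫_ℝ = b v q) {XR : Submodule ℝ X}
    (hq : q ≠ 0) (hwXR : w ∈ XR) (hw₀ : w ≠ 0) :
    IsGreatest {y : ℝ | ∃ vR ∈ XR, vR ≠ 0 ∧ y = b vR q / (‖vR‖ * ‖q‖)} (‖w‖ / ‖q‖) := by
  have hq₀ : 0 < ‖q‖ := norm_pos_iff.mpr hq
  refine ⟨⟨w, hwXR, hw₀, ?_⟩, ?_⟩
  · have : ‖w‖ ≠ 0 := norm_ne_zero_iff.mpr hw₀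
    rw [apply_riesz_eq_norm_sq hw]
    field_simp
  · rintro y ⟨vR, -, hvR, rfl⟩
    have hvR₀ : 0 < ‖vR‖ := norm_pos_iff.mpr hvR
    rw [div_le_div_iff₀ (by positivity) hq₀]
    nlinarith [apply_le_norm_riesz_mul hw vR]

end Supremizer

theorem enriched_space_inf_sup_general
    (X M : Type*) [NormedAddCommGroup X] [InnerProductSpace ℝ X]
    [NormedAddCommGroup M] [InnerProductSpace ℝ M]
    (b : X →ₗ[ℝ] M →ₗ[ℝ] ℝ)
    (γ : ℝ) (hγ : 0 < γ)
    (hinfsup : ∀ q : M, q ≠ 0 → ∃ v : X, v ≠ 0 ∧ γ * (‖v‖ * ‖q‖) ≤ b v q)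
    (s : M →ₗ[ℝ] X) (hs : ∀ (q : M) (v : X), (inner ℝ (s q) v : ℝ) = b v q)
    (MR : Submodule ℝ M) (XR : Submodule ℝ X)
    (hsub : ∀ q ∈ MR, s q ∈ XR) :
    ∀ qR ∈ MR, qR ≠ 0 →
      γ ≤ sSup {y : ℝ | ∃ vR ∈ XR, vR ≠ 0 ∧ y = b vR qR / (‖vR‖ * ‖qR‖)} := by
  intro qR hqR hqR₀
  obtain ⟨v, hv, hbv⟩ := hinfsup qR hqR₀
  have hq₀ : 0 < ‖qR‖ := norm_pos_iff.mpr hqR₀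
  have hγs : γ * ‖qR‖ ≤ ‖s qR‖ := mul_norm_le_norm_riesz (hs qR) hv hbv
  have hs₀ : s qR ≠ 0 := norm_pos_iff.mp (lt_of_lt_of_le (by positivity) hγs)
  rw [(isGreatest_div_norm_riesz (hs qR) hqR₀ (hsub qR hqR) hs₀).csSup_eq]
  exact (le_div_iff₀ hq₀).mpr hγs

theorem enriched_space_inf_sup
    (X M : Type*) [NormedAddCommGroup X] [InnerProductSpace ℝ X] [FiniteDimensional ℝ X]
    [NormedAddCommGroup M] [InnerProductSpace ℝ M] [FiniteDimensional ℝ M]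
    (b : X →ₗ[ℝ] M →ₗ[ℝ] ℝ)
    (γ : ℝ) (hγ : 0 < γ)
    (hinfsup : ∀ q : M, q ≠ 0 → ∃ v : X, v ≠ 0 ∧ γ * (‖v‖ * ‖q‖) ≤ b v q)
    (s : M →ₗ[ℝ] X) (hs : ∀ (q : M) (v : X), (inner ℝ (s q) v : ℝ) = b v q)
    (MR : Submodule ℝ M) (XR : Submodule ℝ X)
    (hsub : ∀ q ∈ MR, s q ∈ XR) :
    ∀ qR ∈ MR, qR ≠ 0 →
      γ ≤ sSup {y : ℝ | ∃ vR ∈ XR, vR ≠ 0 ∧ y = b vR qR / (‖vR‖ * ‖qR‖)} :=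
  enriched_space_inf_sup_general X M b γ hγ hinfsup s hs MR XR hsub
end
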